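/- arXiv:2002.10499 — 3 statements merged into one kernel-verified Lean document; each statement's English description precedes it below -/
import Mathlib

section
/- If n balls are thrown independently and uniformly at random into n bins, then the expected number of bins receiving at least i balls is at most n * (e/i)^i. -/
open Finset Nat

/-- Counting functions with prescribed values on a subset. -/
lemma count_fixed (n : ℕ) (S : Finset (Fin n)) (j : Fin n) :
    (univ.filter (fun ω : Fin n → Fin n => ∀ b ∈ S, ω b = j)).card
      = n ^ (n - S.card) := by
  have h : univ.filter (fun ω : Fin n → Fin n => ∀ b ∈ S, ω b = j)
      = Fintype.piFinset (fun b => if b ∈ S then ({j} : Finset (Fin n)) else univ) := by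
    ext ω
    simp only [mem_filter, mem_univ, true_and, Fintype.mem_piFinset]
    constructor
    · intro h b
      by_cases hb : b ∈ S <;> simp [hb, h b]
    · intro h b hb
      have := h b
      simpa [hb] using this
  rw [h, Fintype.card_piFinset]
  have : ∀ b : Fin n, (if b ∈ S then ({j} : Finset (Fin n)) else univ).card
      = if b ∈ S then 1 else n := by
    intro b; by_cases hb : b ∈ S <;> simp [hb]
  rw [Finset.prod_congr rfl (fun b _ => this b), Finset.prod_ite, Finset.prod_const,
    Finset.prod_const, one_pow, one_mul]
  congr 1
  have : univ.filter (fun b => b ∉ S) = Sᶜ := by ext b; simp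
  rw [this, Finset.card_compl, Fintype.card_fin]

lemma key_count (n i : ℕ) (j : Fin n) :
    (univ.filter (fun ω : Fin n → Fin n =>
        i ≤ (univ.filter (fun b : Fin n => ω b = j)).card)).card
      ≤ n.choose i * n ^ (n - i) := by
  have hsub : univ.filter (fun ω : Fin n → Fin n =>
        i ≤ (univ.filter (fun b : Fin n => ω b = j)).card)
      ⊆ (univ.powersetCard i).biUnion
          (fun S => univ.filter (fun ω : Fin n → Fin n => ∀ b ∈ S, ω b = j)) := by
    intro ω hω
    rw [mem_filter] at hω
    obtain ⟨S, hS, hcard⟩ := Finset.exists_subset_card_eq hω.2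
    refine Finset.mem_biUnion.2 ⟨S, ?_, ?_⟩
    · exact Finset.mem_powersetCard.2 ⟨Finset.subset_univ S, hcard⟩
    · refine mem_filter.2 ⟨mem_univ _, fun b hb => ?_⟩
      have := hS hb
      exact (mem_filter.1 this).2
  calc _ ≤ ((univ.powersetCard i).biUnion
          (fun S => univ.filter (fun ω : Fin n → Fin n => ∀ b ∈ S, ω b = j))).card :=
        Finset.card_le_card hsub
    _ ≤ ∑ S ∈ univ.powersetCard i,
        (univ.filter (fun ω : Fin n → Fin n => ∀ b ∈ S, ω b = j)).card :=
        Finset.card_biUnion_le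
    _ = ∑ S ∈ univ.powersetCard i, n ^ (n - i) := by
        refine Finset.sum_congr rfl fun S hS => ?_
        rw [count_fixed, (Finset.mem_powersetCard.1 hS).2]
    _ = n.choose i * n ^ (n - i) := by
        rw [Finset.sum_const, smul_eq_mul, Finset.card_powersetCard, Finset.card_univ,
          Fintype.card_fin]

/-- `n` balls thrown independently and uniformly at random into `n` bins
(outcomes `ω : Fin n → Fin n`, all `n^n` equally likely).  For every
`1 ≤ i ≤ n`, the expected number of bins receiving at least `i` balls is
at most `n * (e/i)^i`. -/
theorem stmt_3 (n i : ℕ) (hi : 1 ≤ i) (hin : i ≤ n) :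
    (∑ ω : Fin n → Fin n,
        ((Finset.univ.filter
            (fun j : Fin n =>
              i ≤ (Finset.univ.filter (fun b : Fin n => ω b = j)).card)).card : ℝ))
      / (n : ℝ) ^ n ≤ (n : ℝ) * (Real.exp 1 / i) ^ i := by
  have hn : 0 < n := lt_of_lt_of_le hi hin
  have hnR : (0:ℝ) < n := by exact_mod_cast hn
  have hiR : (0:ℝ) < i := by exact_mod_cast hi
  have hfac : (0:ℝ) < (i ! : ℝ) := by exact_mod_cast Nat.factorial_pos i
  -- Nat-level bound on the big sum
  have hNat : (∑ ω : Fin n → Fin n,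
      (univ.filter (fun j : Fin n =>
        i ≤ (univ.filter (fun b : Fin n => ω b = j)).card)).card)
      ≤ n * (n.choose i * n ^ (n - i)) := by
    have hswap : (∑ ω : Fin n → Fin n,
        (univ.filter (fun j : Fin n =>
          i ≤ (univ.filter (fun b : Fin n => ω b = j)).card)).card)
        = ∑ j : Fin n, (univ.filter (fun ω : Fin n → Fin n =>
            i ≤ (univ.filter (fun b : Fin n => ω b = j)).card)).card := by
      simp only [Finset.card_filter]
      rw [Finset.sum_comm]
    rw [hswap]
    calc _ ≤ ∑ _j : Fin n, n.choose i * n ^ (n - i) :=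
          Finset.sum_le_sum fun j _ => key_count n i j
      _ = n * (n.choose i * n ^ (n - i)) := by
          rw [Finset.sum_const, smul_eq_mul, Finset.card_univ, Fintype.card_fin]
  -- the analytic bound 1/i! ≤ (e/i)^i
  have hEi : (1:ℝ) / i ! ≤ (Real.exp 1 / i) ^ i := by
    have hexp : (i:ℝ)^i / i ! ≤ Real.exp i := by
      calc (i:ℝ)^i / i !
          ≤ ∑ k ∈ Finset.range (i+1), (i:ℝ)^k / k ! :=
            Finset.single_le_sum (f := fun k => (i:ℝ)^k / k !)
              (fun k _ => by positivity) (Finset.self_mem_range_succ i)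
        _ ≤ Real.exp i := Real.sum_le_exp_of_nonneg (le_of_lt hiR) _
    rw [div_pow, Real.exp_one_pow, div_le_div_iff₀ hfac (pow_pos hiR i), one_mul]
    rw [div_le_iff₀ hfac] at hexp
    linarith [hexp]
  have h1 : (n.choose i : ℝ) * (n:ℝ)^(n-i) / (n:ℝ)^n ≤ 1 / i ! := by
    rw [div_le_div_iff₀ (by positivity) hfac]
    have hc : (n.choose i : ℝ) * i ! ≤ (n:ℝ)^i := by
      have h := Nat.choose_le_pow_div (α := ℝ) i n
      calc (n.choose i : ℝ) * i ! ≤ ((n:ℝ)^i / i !) * i ! := by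
            apply mul_le_mul_of_nonneg_right _ hfac.le
            exact_mod_cast h
        _ = (n:ℝ)^i := div_mul_cancel₀ _ hfac.ne'
    calc (n.choose i : ℝ) * (n:ℝ)^(n-i) * i !
        = ((n.choose i : ℝ) * i !) * (n:ℝ)^(n-i) := by ring
      _ ≤ (n:ℝ)^i * (n:ℝ)^(n-i) := by
          apply mul_le_mul_of_nonneg_right hc (by positivity)
      _ = 1 * (n:ℝ)^n := by rw [← pow_add, Nat.add_sub_cancel' hin, one_mul]
  have hNatR : (∑ ω : Fin n → Fin n,
      ((univ.filter (fun j : Fin n =>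
        i ≤ (univ.filter (fun b : Fin n => ω b = j)).card)).card : ℝ))
      ≤ (n:ℝ) * ((n.choose i : ℝ) * (n:ℝ)^(n-i)) := by exact_mod_cast hNat
  calc (∑ ω : Fin n → Fin n,
        ((univ.filter (fun j : Fin n =>
          i ≤ (univ.filter (fun b : Fin n => ω b = j)).card)).card : ℝ)) / (n:ℝ)^n
      ≤ ((n:ℝ) * ((n.choose i : ℝ) * (n:ℝ)^(n-i))) / (n:ℝ)^n := by
        gcongr
    _ = (n:ℝ) * ((n.choose i : ℝ) * (n:ℝ)^(n-i) / (n:ℝ)^n) := by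
        rw [mul_div_assoc]
    _ ≤ (n:ℝ) * (Real.exp 1 / i) ^ i := by
        apply mul_le_mul_of_nonneg_left (h1.trans hEi) hnR.le
end

section
/- Let n balls be thrown independently and uniformly at random into n bins. For every constant c > 0 and every bin j, P(sum_j B_j^2 >= c*n) >= 2^{-2 - sqrt(cn)*log2(sqrt(cn))} for sufficiently large n; in particular the probability that the sum of squared occupancies exceeds c*n is at least exp(-O(sqrt(n) log n)). -/
open Nat Real Finset

/-- Number of `ω : Fin n → Fin n` whose fiber over `z` is exactly `T`. -/
lemma stmt15_fiber_card (n : ℕ) (z : Fin n) (T : Finset (Fin n)) :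
    (univ.filter (fun ω : Fin n → Fin n => ∀ b, ω b = z ↔ b ∈ T)).card
      = (n - 1) ^ (n - T.card) := by
  rw [← Fintype.card_subtype]
  rw [Fintype.card_congr (Equiv.subtypePiEquivPi (p := fun b (x : Fin n) => x = z ↔ b ∈ T))]
  rw [Fintype.card_pi]
  have h : ∀ b : Fin n, Fintype.card {x : Fin n // x = z ↔ b ∈ T}
      = if b ∈ T then 1 else n - 1 := by
    intro b
    by_cases hb : b ∈ T
    · rw [if_pos hb]
      rw [Fintype.card_congr (Equiv.subtypeEquivRight (q := fun x => x = z)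
        (fun x => by simp [hb]))]
      exact Fintype.card_subtype_eq z
    · rw [if_neg hb]
      rw [Fintype.card_congr (Equiv.subtypeEquivRight (q := fun x => ¬ x = z)
        (fun x => by simp [hb]))]
      rw [Fintype.card_subtype_compl]
      simp [Fintype.card_subtype_eq]
  simp only [h]
  rw [Finset.prod_ite, Finset.prod_const, Finset.prod_const, one_pow, one_mul]
  congr 1
  rw [Finset.filter_not, Finset.filter_mem_eq_inter, Finset.univ_inter,
    Finset.card_sdiff_of_subset (Finset.subset_univ T), Finset.card_univ, Fintype.card_fin]

lemma stmt15_count_lower (c : ℝ) (n i : ℕ) (hn : 0 < n) (hci : c * n ≤ (i:ℝ)^2) :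
    (n.choose i) * (n-1)^(n-i) ≤
      (univ.filter (fun ω : Fin n → Fin n =>
        c * n ≤ ∑ j : Fin n, ((univ.filter (fun b => ω b = j)).card : ℝ)^2)).card := by
  classical
  set z : Fin n := ⟨0, hn⟩ with hz
  set A : Finset (Fin n) → Finset (Fin n → Fin n) :=
    fun T => univ.filter (fun ω : Fin n → Fin n => ∀ b, ω b = z ↔ b ∈ T) with hA
  have hdisj : ∀ T ∈ univ.powersetCard i, ∀ T' ∈ univ.powersetCard i,
      T ≠ T' → Disjoint (A T) (A T') := by
    intro T _ T' _ hne
    rw [Finset.disjoint_left]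
    intro ω hω hω'
    simp only [hA, mem_filter] at hω hω'
    exact hne (Finset.ext fun b => (hω.2 b).symm.trans (hω'.2 b))
  have hcard : ((univ.powersetCard i).biUnion A).card
      = (n.choose i) * (n-1)^(n-i) := by
    rw [Finset.card_biUnion hdisj]
    have : ∀ T ∈ univ.powersetCard i, (A T).card = (n-1)^(n-i) := by
      intro T hT
      rw [hA]
      rw [stmt15_fiber_card n z T, (Finset.mem_powersetCard.mp hT).2]
    rw [Finset.sum_congr rfl this, Finset.sum_const, Finset.card_powersetCard,
      Finset.card_univ, Fintype.card_fin, smul_eq_mul]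
  rw [← hcard]
  apply Finset.card_le_card
  intro ω hω
  simp only [Finset.mem_biUnion, hA, mem_filter, mem_univ, true_and] at hω
  obtain ⟨T, hT, hωT⟩ := hω
  have hfil : univ.filter (fun b => ω b = z) = T := Finset.ext fun b => by
    simp [hωT b]
  have hTc : T.card = i := (Finset.mem_powersetCard.mp hT).2
  rw [mem_filter]
  refine ⟨mem_univ _, le_trans ?_ (Finset.single_le_sum
    (f := fun j => ((univ.filter (fun b => ω b = j)).card : ℝ)^2)
    (fun j _ => sq_nonneg _) (mem_univ z))⟩
  simpa [hfil, hTc] using hci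

lemma stmt15_two_mul_pow_le_succ_pow (i : ℕ) (hi : 1 ≤ i) : 2 * i^i ≤ (i+1)^i := by
  have h : (2 : ℝ) * (i:ℝ)^i ≤ ((i:ℝ)+1)^i := by
    have hb : (1 : ℝ) + (i:ℕ) * (1/(i:ℝ)) ≤ (1 + 1/(i:ℝ))^(i:ℕ) :=
      one_add_mul_le_pow (by positivity |> le_trans (by norm_num : (-2:ℝ) ≤ 0)) i
    have hi0 : (0:ℝ) < i := by exact_mod_cast hi
    have h2 : (2:ℝ) ≤ (1 + 1/(i:ℝ))^(i:ℕ) := by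
      rw [mul_one_div, div_self (ne_of_gt hi0)] at hb
      linarith
    have := mul_le_mul_of_nonneg_right h2 (pow_nonneg (le_of_lt hi0) i)
    calc (2:ℝ) * (i:ℝ)^i ≤ (1 + 1/(i:ℝ))^(i:ℕ) * (i:ℝ)^i := this
      _ = ((1 + 1/(i:ℝ)) * i)^i := by rw [mul_pow]
      _ = ((i:ℝ)+1)^i := by field_simp
  exact_mod_cast h

lemma stmt15_factorial_mul_two_pow_le (i : ℕ) (hi : 1 ≤ i) : i ! * 2^(i-1) ≤ i^i := by
  induction i with
  | zero => omega
  | succ k ih =>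
    rcases Nat.eq_or_lt_of_le hi with h1 | h1
    · simp [← h1]
    · have hk : 1 ≤ k := by omega
      have ihk := ih hk
      have : (k+1)! * 2^k = (k+1) * (k ! * 2^(k-1)) * 2 := by
        rw [Nat.factorial_succ]
        have : 2^k = 2^(k-1) * 2 := by
          rw [← pow_succ]; congr 1; omega
        rw [this]; ring
      calc (k+1)! * 2^(k+1-1) = (k+1) * (k ! * 2^(k-1)) * 2 := this
        _ ≤ (k+1) * k^k * 2 := by
            have := Nat.mul_le_mul_left (k+1) ihk
            exact Nat.mul_le_mul_right 2 this
        _ = (k+1) * (2 * k^k) := by ring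
        _ ≤ (k+1) * (k+1)^k := Nat.mul_le_mul_left _ (stmt15_two_mul_pow_le_succ_pow k hk)
        _ = (k+1)^(k+1) := by rw [← pow_succ']

lemma stmt15_exp_neg_two_mul_le {x : ℝ} (h0 : 0 ≤ x) (h : x ≤ 1/2) :
    Real.exp (-(2*x)) ≤ 1 - x := by
  have h1 : 1 + 2*x ≤ Real.exp (2*x) := by
    have := Real.add_one_le_exp (2*x); linarith
  have h2 : Real.exp (-(2*x)) * Real.exp (2*x) = 1 := by
    rw [← Real.exp_add]; simp
  have h3 : 0 < Real.exp (-(2*x)) := Real.exp_pos _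
  nlinarith [Real.exp_pos (2*x)]

lemma stmt15_sq_div_four_le_exp {x : ℝ} (hx : 0 ≤ x) : x^2/4 ≤ Real.exp x := by
  have h1 : 1 + x/2 ≤ Real.exp (x/2) := by
    have := Real.add_one_le_exp (x/2); linarith
  have h2 : Real.exp x = Real.exp (x/2) * Real.exp (x/2) := by
    rw [← Real.exp_add]; ring_nf
  nlinarith [Real.exp_pos (x/2)]

lemma stmt15_final (c s : ℝ) (i : ℕ) (hc : 0 < c) (hs2 : 2 ≤ s) (hsi : s ≤ i)
    (his : (i:ℝ) ≤ s+1) (hi1 : 1 ≤ i)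
    (hKs : 64*(Real.exp (3*c+4)/4) ≤ s) :
    (1/4) * s^(-s) ≤ Real.exp (-(3*c)) * Real.exp (-2) * ((2:ℝ)^(i-1) / (i:ℝ)^i) := by
  have hs0 : (0:ℝ) < s := by linarith
  have hi0 : (0:ℝ) < (i:ℝ) := by exact_mod_cast hi1
  have hii0 : (0:ℝ) < (i:ℝ)^i := by positivity
  have hss0 : (0:ℝ) < s^s := Real.rpow_pos_of_pos hs0 _
  have hlog2 : (0.6931471803:ℝ) < Real.log 2 := Real.log_two_gt_d9
  have h2pow : Real.exp (3*c+4)/4 * s ≤ (2:ℝ)^(i-1) := by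
    have e1 : (2:ℝ)^(i-1) = (2:ℝ)^(((i-1:ℕ)):ℝ) := (Real.rpow_natCast 2 (i-1)).symm
    have e2 : s - 1 ≤ ((i-1:ℕ):ℝ) := by
      have h : ((i-1:ℕ):ℝ) = (i:ℝ) - 1 := by
        rw [Nat.cast_sub hi1]; norm_num
      rw [h]; linarith
    have e3 : (2:ℝ)^(s-1) ≤ (2:ℝ)^(((i-1:ℕ)):ℝ) :=
      Real.rpow_le_rpow_of_exponent_le one_le_two e2
    have e4 : (2:ℝ)^(s-1) = Real.exp (Real.log 2 * (s-1)) :=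
      Real.rpow_def_of_pos two_pos (s-1)
    have e5 : (Real.log 2 * (s-1))^2/4 ≤ Real.exp (Real.log 2 * (s-1)) :=
      stmt15_sq_div_four_le_exp (by nlinarith)
    have e6 : s/4 ≤ Real.log 2 * (s-1) := by nlinarith
    have e7 : s^2/64 ≤ (Real.log 2 * (s-1))^2/4 := by nlinarith
    have e8 : Real.exp (3*c+4)/4 * s ≤ s^2/64 := by nlinarith [Real.exp_pos (3*c+4)]
    rw [e1]
    linarith
  have hipow : ((i:ℝ))^i ≤ Real.exp 2 * s * s^s := by
    have l1 : Real.log (s+1) ≤ Real.log s + 1/s := by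
      rw [show s + 1 = s * (1 + 1/s) by field_simp]
      rw [Real.log_mul (ne_of_gt hs0) (by positivity)]
      have := Real.log_le_sub_one_of_pos (show (0:ℝ) < 1 + 1/s by positivity)
      linarith
    have l2 : (0:ℝ) ≤ Real.log s := Real.log_nonneg (by linarith)
    have l3 : (1:ℝ)/s ≤ 1 := by rw [div_le_one hs0]; linarith
    have l4 : (s+1)*(1/s) = 1 + 1/s := by field_simp
    have hlog : (s+1) * Real.log (s+1) ≤ 2 + Real.log s + s * Real.log s := by
      nlinarith [mul_le_mul_of_nonneg_left l1 (show (0:ℝ) ≤ s+1 by linarith)]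
    have c1 : ((i:ℝ))^i = (i:ℝ)^((i:ℕ):ℝ) := (Real.rpow_natCast _ _).symm
    have c2 : (i:ℝ)^((i:ℕ):ℝ) ≤ (s+1)^((i:ℕ):ℝ) :=
      Real.rpow_le_rpow (le_of_lt hi0) his (by positivity)
    have c3 : (s+1)^((i:ℕ):ℝ) ≤ (s+1)^(s+1) :=
      Real.rpow_le_rpow_of_exponent_le (by linarith) his
    have c4 : (s+1)^(s+1) = Real.exp (Real.log (s+1) * (s+1)) :=
      Real.rpow_def_of_pos (by linarith) _
    have c5 : Real.exp (Real.log (s+1) * (s+1)) ≤ Real.exp (2 + Real.log s + s * Real.log s) := by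
      apply Real.exp_le_exp.mpr; nlinarith
    have c6 : Real.exp (2 + Real.log s + s * Real.log s) = Real.exp 2 * s * s^s := by
      rw [Real.exp_add, Real.exp_add, Real.exp_log hs0]
      congr 1
      rw [Real.rpow_def_of_pos hs0]
      ring_nf
    rw [c1]; rw [c6] at c5; linarith
  rw [Real.rpow_neg (le_of_lt hs0)]
  rw [show Real.exp (-(3*c)) * Real.exp (-2) * ((2:ℝ)^(i-1) / (i:ℝ)^i)
    = Real.exp (-(3*c)) * Real.exp (-2) * (2:ℝ)^(i-1) / (i:ℝ)^i from by ring]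
  rw [le_div_iff₀ hii0]
  have key : (1/4) * (i:ℝ)^i ≤ s^s * (Real.exp (-(3*c)) * Real.exp (-2) * (2:ℝ)^(i-1)) := by
    have e0 : (0:ℝ) < Real.exp (-(3*c)) * Real.exp (-2) := by positivity
    have h1 : s^s * (Real.exp (-(3*c)) * Real.exp (-2) * (2:ℝ)^(i-1))
        ≥ s^s * (Real.exp (-(3*c)) * Real.exp (-2) * (Real.exp (3*c+4)/4 * s)) := by
      apply mul_le_mul_of_nonneg_left ?_ (le_of_lt hss0)
      exact mul_le_mul_of_nonneg_left h2pow (le_of_lt e0)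
    have h2 : s^s * (Real.exp (-(3*c)) * Real.exp (-2) * (Real.exp (3*c+4)/4 * s))
        = (1/4) * (Real.exp 2 * s * s^s) := by
      have hE : Real.exp (-(3*c)) * Real.exp (-2) * Real.exp (3*c+4) = Real.exp 2 := by
        rw [← Real.exp_add, ← Real.exp_add]
        ring_nf
      linear_combination (s^s * s / 4) * hE
    rw [h2] at h1
    nlinarith
  calc 1/4 * (s^s)⁻¹ * (i:ℝ)^i = (1/4) * (i:ℝ)^i * (s^s)⁻¹ := by ring
    _ ≤ s^s * (Real.exp (-(3*c)) * Real.exp (-2) * (2:ℝ)^(i-1)) * (s^s)⁻¹ := by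
        apply mul_le_mul_of_nonneg_right key (by positivity)
    _ = Real.exp (-(3*c)) * Real.exp (-2) * (2:ℝ)^(i-1) * (s^s * (s^s)⁻¹) := by ring
    _ = Real.exp (-(3*c)) * Real.exp (-2) * (2:ℝ)^(i-1) := by
        rw [mul_inv_cancel₀ (ne_of_gt hss0), mul_one]

lemma stmt15_core (c s : ℝ) (n i : ℕ) (hc : 0 < c)
    (hn2 : 2 ≤ n)
    (hs2 : 2 ≤ s)
    (hsi : s ≤ i)
    (his : (i:ℝ) ≤ s + 1)
    (hin : 2*i ≤ n)
    (hi2 : ((i:ℝ))^2 ≤ (3/2)*(c*n))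
    (hKs : 64*(Real.exp (3*c+4)/4) ≤ s) :
    (1/4) * s^(-s) ≤ ((n.choose i * (n-1)^(n-i) : ℕ) : ℝ) / (n:ℝ)^n := by
  have hs0 : (0:ℝ) < s := by linarith
  have hi1 : 1 ≤ i := by
    by_contra h
    push_neg at h
    interval_cases i
    simp at hsi
    linarith
  have hin' : i ≤ n := by omega
  have hn0 : (0:ℝ) < n := by positivity
  have hnn0 : (0:ℝ) < (n:ℝ)^n := by positivity
  have hni : ((n - i : ℕ) : ℝ) = (n:ℝ) - i := by
    rw [Nat.cast_sub hin']
  have hn1 : ((n - 1 : ℕ) : ℝ) = (n:ℝ) - 1 := by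
    rw [Nat.cast_sub (by omega)]; norm_num
  have hfact0 : (0:ℝ) < (i ! : ℝ) := by positivity
  have h1 : ((n-i:ℕ):ℝ)^i / (i ! : ℝ) ≤ (n.choose i : ℝ) := by
    refine le_trans ?_ (Nat.pow_le_choose i n)
    apply div_le_div_of_nonneg_right ?_ hfact0.le
    exact_mod_cast Nat.pow_le_pow_left (by omega : n - i ≤ n + 1 - i) i
  have key : (1/(i !:ℝ)) * (((n-i:ℕ):ℝ)/n)^i * (((n-1:ℕ):ℝ)/n)^(n-i)
      ≤ ((n.choose i * (n-1)^(n-i) : ℕ) : ℝ) / (n:ℝ)^n := by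
    have hrhs : ((n.choose i * (n-1)^(n-i) : ℕ):ℝ)
        = (n.choose i : ℝ) * ((n-1:ℕ):ℝ)^(n-i) := by
      rw [Nat.cast_mul, Nat.cast_pow]
    have hnn : (n:ℝ)^i * (n:ℝ)^(n-i) = (n:ℝ)^n := by
      rw [← pow_add]; congr 1; omega
    rw [hrhs, div_pow, div_pow]
    rw [show (1:ℝ)/(i !:ℝ) * (((n-i:ℕ):ℝ)^i/(n:ℝ)^i) * (((n-1:ℕ):ℝ)^(n-i)/(n:ℝ)^(n-i))
      = (((n-i:ℕ):ℝ)^i/(i !:ℝ)) * ((n-1:ℕ):ℝ)^(n-i) / ((n:ℝ)^i * (n:ℝ)^(n-i)) from by ring]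
    rw [hnn]
    apply div_le_div_of_nonneg_right ?_ hnn0.le
    exact mul_le_mul_of_nonneg_right h1 (by positivity)
  refine le_trans ?_ key
  have hexp1 : Real.exp (-(3*c)) ≤ (((n-i:ℕ):ℝ)/n)^i := by
    have hx : (i:ℝ)/n ≤ 1/2 := by
      rw [div_le_div_iff₀ hn0 (by norm_num)]
      have h2i : ((2*i:ℕ):ℝ) ≤ (n:ℝ) := by exact_mod_cast hin
      push_cast at h2i
      linarith
    have hb := stmt15_exp_neg_two_mul_le (by positivity) hx
    have hbase : Real.exp (-(2*((i:ℝ)/n))) ≤ ((n-i:ℕ):ℝ)/n := by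
      rw [hni, sub_div, div_self (ne_of_gt hn0)]
      exact hb
    have hexpand : ((i:ℕ):ℝ) * -(2*((i:ℝ)/n)) = -(2*(i:ℝ)^2/n) := by
      field_simp
    calc Real.exp (-(3*c)) ≤ Real.exp ((i:ℕ) * -(2*((i:ℝ)/n))) := by
          apply Real.exp_le_exp.mpr
          rw [hexpand]
          have : 2*(i:ℝ)^2/n ≤ 3*c := by
            rw [div_le_iff₀ hn0]
            nlinarith
          linarith
      _ = Real.exp (-(2*((i:ℝ)/n))) ^ i := Real.exp_nat_mul _ i
      _ ≤ (((n-i:ℕ):ℝ)/n)^i := pow_le_pow_left₀ (Real.exp_nonneg _) hbase i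
  have hexp2 : Real.exp (-2) ≤ (((n-1:ℕ):ℝ)/n)^(n-i) := by
    have hx : (1:ℝ)/n ≤ 1/2 := by
      rw [div_le_div_iff₀ hn0 (by norm_num)]
      have : (2:ℝ) ≤ n := by exact_mod_cast hn2
      linarith
    have hb := stmt15_exp_neg_two_mul_le (by positivity) hx
    have hbase : Real.exp (-(2*((1:ℝ)/n))) ≤ ((n-1:ℕ):ℝ)/n := by
      rw [hn1, sub_div, div_self (ne_of_gt hn0)]
      exact hb
    have hexpand : ((n-i:ℕ):ℝ) * -(2*((1:ℝ)/n)) = -(2*((n-i:ℕ):ℝ)/n) := by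
      field_simp
    calc Real.exp (-2) ≤ Real.exp ((n-i:ℕ) * -(2*((1:ℝ)/n))) := by
          apply Real.exp_le_exp.mpr
          rw [hexpand]
          have h1' : ((n-i:ℕ):ℝ) ≤ n := by
            rw [hni]
            have : (0:ℝ) ≤ i := Nat.cast_nonneg _
            linarith
          have : 2*((n-i:ℕ):ℝ)/n ≤ 2 := by
            rw [div_le_iff₀ hn0]
            linarith
          linarith
      _ = Real.exp (-(2*((1:ℝ)/n))) ^ (n-i) := Real.exp_nat_mul _ _
      _ ≤ (((n-1:ℕ):ℝ)/n)^(n-i) := pow_le_pow_left₀ (Real.exp_nonneg _) hbase _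
  have hfac : (2:ℝ)^(i-1) / (i:ℝ)^i ≤ 1/(i !:ℝ) := by
    have h := stmt15_factorial_mul_two_pow_le i hi1
    have h' : ((i !:ℕ):ℝ) * (2:ℝ)^(i-1) ≤ (i:ℝ)^i := by exact_mod_cast h
    have hii : (0:ℝ) < (i:ℝ)^i := by
      have : (0:ℝ) < (i:ℝ) := by exact_mod_cast hi1
      positivity
    rw [div_le_div_iff₀ hii hfact0]
    nlinarith
  have hcomb : Real.exp (-(3*c)) * Real.exp (-2) * ((2:ℝ)^(i-1) / (i:ℝ)^i)
      ≤ (1/(i !:ℝ)) * (((n-i:ℕ):ℝ)/n)^i * (((n-1:ℕ):ℝ)/n)^(n-i) := by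
    have e2 : (0:ℝ) ≤ Real.exp (-2) := Real.exp_nonneg _
    calc Real.exp (-(3*c)) * Real.exp (-2) * ((2:ℝ)^(i-1) / (i:ℝ)^i)
        ≤ Real.exp (-(3*c)) * Real.exp (-2) * (1/(i !:ℝ)) :=
          mul_le_mul_of_nonneg_left hfac (by positivity)
      _ ≤ (((n-i:ℕ):ℝ)/n)^i * (((n-1:ℕ):ℝ)/n)^(n-i) * (1/(i !:ℝ)) := by
          apply mul_le_mul_of_nonneg_right ?_ (by positivity)
          exact mul_le_mul hexp1 hexp2 e2 (by positivity)
      _ = (1/(i !:ℝ)) * (((n-i:ℕ):ℝ)/n)^i * (((n-1:ℕ):ℝ)/n)^(n-i) := by ring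
  exact le_trans (stmt15_final c s i hc hs2 hsi his hi1 hKs) hcomb

/-- `n` balls thrown independently and uniformly at random into `n` bins
(outcomes `ω : Fin n → Fin n`, all `n^n` equally likely).  For every constant
`c > 0`, for sufficiently large `n`, the probability that the sum of squared
bin occupancies is at least `c·n` is at least
`2^(-2 - √(cn)·log₂(√(cn)))`, i.e. `exp(-O(√n log n))`. -/
theorem stmt_15 (c : ℝ) (hc : 0 < c) :
    ∃ N : ℕ, ∀ n : ℕ, N ≤ n →
      (2 : ℝ) ^ (-2 - Real.sqrt (c * n) * Real.logb 2 (Real.sqrt (c * n))) ≤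
        ((Finset.univ.filter
            (fun ω : Fin n → Fin n =>
              c * n ≤ ∑ j : Fin n,
                ((Finset.univ.filter (fun b : Fin n => ω b = j)).card : ℝ) ^ 2)).card : ℝ)
          / (n : ℝ) ^ n := by
  set K : ℝ := Real.exp (3*c+4)/4 with hK
  set S : ℝ := max (max 2 (64*K)) (max 6 (4*c)) with hS
  have hS0 : (0:ℝ) ≤ S := le_trans (by norm_num) (le_trans (le_max_left 2 (64*K)) (le_max_left _ _))
  refine ⟨⌈S^2/c⌉₊ + 2, fun n hn => ?_⟩
  have hn2 : 2 ≤ n := by omega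
  have hn0 : 0 < n := by omega
  have hnR : (0:ℝ) < n := by exact_mod_cast hn0
  have hcn0 : (0:ℝ) ≤ c * n := by positivity
  set s : ℝ := Real.sqrt (c * n) with hs
  have hcns : c * n = s^2 := (Real.sq_sqrt hcn0).symm
  have hSs : S ≤ s := by
    have h1 : S^2/c ≤ (⌈S^2/c⌉₊ : ℝ) := Nat.le_ceil _
    have h2 : ((⌈S^2/c⌉₊ : ℕ):ℝ) ≤ (n:ℝ) := by exact_mod_cast (by omega : ⌈S^2/c⌉₊ ≤ n)
    have h3 : S^2 ≤ c * n := by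
      rw [← div_le_iff₀' hc]
      linarith
    calc S = Real.sqrt (S^2) := (Real.sqrt_sq hS0).symm
      _ ≤ s := Real.sqrt_le_sqrt h3
  have hs2 : 2 ≤ s := le_trans (le_trans (le_max_left 2 (64*K)) (le_max_left _ _)) hSs
  have hs6 : 6 ≤ s := le_trans (le_trans (le_max_left 6 (4*c)) (le_max_right _ _)) hSs
  have hs4c : 4*c ≤ s := le_trans (le_trans (le_max_right 6 (4*c)) (le_max_right _ _)) hSs
  have hKs : 64*K ≤ s := le_trans (le_trans (le_max_right 2 (64*K)) (le_max_left _ _)) hSs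
  have hs0 : (0:ℝ) < s := by linarith
  set i : ℕ := ⌈s⌉₊ with hi
  have hsi : s ≤ (i:ℝ) := Nat.le_ceil s
  have his : (i:ℝ) ≤ s + 1 := (Nat.ceil_lt_add_one hs0.le).le
  have hi2 : ((i:ℝ))^2 ≤ (3/2)*(c*n) := by
    rw [hcns]
    nlinarith
  have hin : 2*i ≤ n := by
    have h1 : 2*(s+1) ≤ (n:ℝ) := by
      have h2 : 2*c*(s+1) ≤ s^2 := by nlinarith
      rw [← hcns] at h2
      nlinarith
    have : ((2*i : ℕ):ℝ) ≤ (n:ℝ) := by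
      push_cast
      linarith
    exact_mod_cast this
  have hci : c * n ≤ (i:ℝ)^2 := by
    rw [hcns]
    nlinarith
  -- counting bound
  have hcount := stmt15_count_lower c n i hn0 hci
  have hcountR : ((n.choose i * (n-1)^(n-i) : ℕ):ℝ)
      ≤ ((Finset.univ.filter
            (fun ω : Fin n → Fin n =>
              c * n ≤ ∑ j : Fin n,
                ((Finset.univ.filter (fun b : Fin n => ω b = j)).card : ℝ) ^ 2)).card : ℝ) := by
    exact_mod_cast hcount
  have hcore := stmt15_core c s n i hc hn2 hs2 hsi his hin hi2 hKs
  -- identify LHS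
  have hL : (2:ℝ) ^ (-2 - s * Real.logb 2 s) = (1/4) * s^(-s) := by
    have h1 : (-2 - s * Real.logb 2 s) = (-2 : ℝ) + Real.logb 2 s * (-s) := by ring
    rw [h1, Real.rpow_add two_pos]
    congr 1
    · rw [show (-2:ℝ) = ((-2:ℤ):ℝ) by norm_num, Real.rpow_intCast]
      norm_num
    · rw [Real.rpow_mul (by norm_num : (0:ℝ) ≤ 2), Real.rpow_logb two_pos (by norm_num) hs0]
  rw [hL]
  refine le_trans hcore ?_
  apply div_le_div_of_nonneg_right hcountR ?_
  positivity
end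

section
/- For every set L of n distinct infinite binary strings and k = ceil(log2 n), the k-excess path length satisfies p_k(L) >= sum over depth-k nodes v of (C_v * log2(C_v)) taken over nodes with C_v > 0, where C_v is the number of strings of L whose length-k prefix corresponds to v. -/
/-- `β` is a prefix of the infinite binary string `α`. -/
def IsPrefixOfSeq (β : List Bool) (α : ℕ → Bool) : Prop :=
  ∀ m : Fin β.length, β.get m = α m

/-- `φ` assigns to each string of `L` a prefix of length at least `k`, and the
resulting family of prefixes is prefix-free. -/
def IsKPrefixFamily (L : Finset (ℕ → Bool)) (k : ℕ) (φ : (ℕ → Bool) → List Bool) : Prop :=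
  (∀ α ∈ L, IsPrefixOfSeq (φ α) α) ∧
  (∀ α ∈ L, k ≤ (φ α).length) ∧
  (∀ α ∈ L, ∀ β ∈ L, α ≠ β → ¬ (φ α <+: φ β))

/-- `φ` is a minimal-total-length such assignment, i.e. it realizes `φ_k(L)`. -/
def IsMinimalKPrefixFamily (L : Finset (ℕ → Bool)) (k : ℕ)
    (φ : (ℕ → Bool) → List Bool) : Prop :=
  IsKPrefixFamily L k φ ∧
  ∀ ψ, IsKPrefixFamily L k ψ → ∑ α ∈ L, (φ α).length ≤ ∑ α ∈ L, (ψ α).length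


open Finset

/-- If β and γ both match f on their whole lengths and |β| ≤ |γ| ≤ N, then β is a prefix of γ. -/
lemma prefix_of_match {N : ℕ} (β γ : List Bool) (f : Fin N → Bool)
    (hβ : ∀ i : Fin N, ∀ h : (i : ℕ) < β.length, β.get ⟨i, h⟩ = f i)
    (hγ : ∀ i : Fin N, ∀ h : (i : ℕ) < γ.length, γ.get ⟨i, h⟩ = f i)
    (hlen : β.length ≤ γ.length) (hN : γ.length ≤ N) : β <+: γ := by
  have : β = γ.take β.length := by
    apply List.ext_get
    · simp [Nat.min_eq_left hlen]
    · intro i h1 h2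
      have hiN : i < N := lt_of_lt_of_le (lt_of_lt_of_le h1 hlen) hN
      have hb := hβ ⟨i, hiN⟩ h1
      have hg := hγ ⟨i, hiN⟩ (lt_of_lt_of_le h1 hlen)
      simp only [List.get_eq_getElem] at hb hg ⊢
      rw [List.getElem_take]
      simp [hb, hg]
  rw [this]
  exact List.take_prefix _ _

/-- Cardinality of a cylinder. -/
lemma card_cyl {N : ℕ} (β : List Bool) (hβ : β.length ≤ N) :
    (Finset.univ.filter (fun f : Fin N → Bool =>
      ∀ i : Fin N, ∀ h : (i : ℕ) < β.length, β.get ⟨i, h⟩ = f i)).card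
      = 2 ^ (N - β.length) := by
  set l := β.length with hl
  set emb : (Fin (N - l) → Bool) → (Fin N → Bool) := fun u i =>
    if h : (i : ℕ) < l then β.get ⟨i, h⟩ else u ⟨(i : ℕ) - l, by omega⟩ with hemb
  have hinj : Function.Injective emb := by
    intro u v huv
    funext j
    have hj : (l + (j : ℕ)) < N := by omega
    have := congrFun huv ⟨l + (j : ℕ), hj⟩
    simp only [hemb] at this
    rw [dif_neg (by omega), dif_neg (by omega)] at this
    simpa using this
  have himg : (Finset.univ.filter (fun f : Fin N → Bool =>
      ∀ i : Fin N, ∀ h : (i : ℕ) < β.length, β.get ⟨i, h⟩ = f i))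
      = Finset.univ.image emb := by
    ext f
    simp only [mem_filter, mem_univ, true_and, mem_image]
    constructor
    · intro hf
      refine ⟨fun j => f ⟨l + (j : ℕ), by omega⟩, ?_⟩
      funext i
      by_cases h : (i : ℕ) < l
      · simp only [hemb, dif_pos h]
        exact hf i h
      · simp only [hemb, dif_neg h]
        congr 1
        ext
        simp
        omega
    · rintro ⟨u, rfl⟩
      intro i h
      simp [hemb, dif_pos h]
      intro h'
      omega
  rw [himg, Finset.card_image_of_injective _ hinj]
  simp
  omega

/-- Kraft's inequality for an indexed prefix-free family of binary strings. -/
lemma kraft {ι : Type*} [DecidableEq ι] (A : Finset ι) (g : ι → List Bool)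
    (hpf : ∀ a ∈ A, ∀ b ∈ A, a ≠ b → ¬ (g a <+: g b)) :
    ∑ a ∈ A, (2 : ℝ) ^ (-((g a).length : ℤ)) ≤ 1 := by
  set N := A.sup (fun a => (g a).length) with hN
  have hle : ∀ a ∈ A, (g a).length ≤ N := fun a ha => Finset.le_sup (f := fun a => (g a).length) ha
  set E : ι → Finset (Fin N → Bool) := fun a =>
    Finset.univ.filter (fun f : Fin N → Bool =>
      ∀ i : Fin N, ∀ h : (i : ℕ) < (g a).length, (g a).get ⟨i, h⟩ = f i) with hE
  have hdisj : ∀ a ∈ A, ∀ b ∈ A, a ≠ b → Disjoint (E a) (E b) := by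
    intro a ha b hb hab
    rw [Finset.disjoint_left]
    intro f hfa hfb
    simp only [hE, mem_filter, mem_univ, true_and] at hfa hfb
    rcases le_total (g a).length (g b).length with h | h
    · exact hpf a ha b hb hab (prefix_of_match _ _ f hfa hfb h (hle b hb))
    · exact hpf b hb a ha hab.symm (prefix_of_match _ _ f hfb hfa h (hle a ha))
  have hcard : (A.biUnion E).card = ∑ a ∈ A, (E a).card := Finset.card_biUnion hdisj
  have hsum : ∑ a ∈ A, (2 : ℕ) ^ (N - (g a).length) ≤ 2 ^ N := by
    calc ∑ a ∈ A, (2 : ℕ) ^ (N - (g a).length)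
        = ∑ a ∈ A, (E a).card := by
          refine Finset.sum_congr rfl fun a ha => ?_
          rw [hE]
          exact (card_cyl (g a) (hle a ha)).symm
      _ = (A.biUnion E).card := hcard.symm
      _ ≤ (Finset.univ : Finset (Fin N → Bool)).card := Finset.card_le_univ _
      _ = 2 ^ N := by simp
  have h2 : (0 : ℝ) < 2 ^ N := by positivity
  have hterm : ∀ a ∈ A, (2 : ℝ) ^ (-((g a).length : ℤ))
      = ((2 : ℝ) ^ (N - (g a).length)) / 2 ^ N := by
    intro a ha
    rw [eq_div_iff (ne_of_gt h2), ← zpow_natCast (2:ℝ) (N - (g a).length),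
      ← zpow_natCast (2:ℝ) N, ← zpow_add₀ (by norm_num : (2:ℝ) ≠ 0)]
    congr 1
    have := hle a ha
    omega
  rw [Finset.sum_congr rfl hterm, ← Finset.sum_div, div_le_one h2]
  calc ∑ a ∈ A, ((2:ℝ) ^ (N - (g a).length))
      = ((∑ a ∈ A, (2:ℕ) ^ (N - (g a).length) : ℕ) : ℝ) := by push_cast; ring_nf
    _ ≤ ((2 ^ N : ℕ) : ℝ) := by exact_mod_cast hsum
    _ = 2 ^ N := by push_cast; ring

/-- Entropy lower bound from Kraft. -/
lemma entropy_bound {ι : Type*} (A : Finset ι) (l : ι → ℕ)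
    (h : ∑ a ∈ A, (2 : ℝ) ^ (-(l a : ℤ)) ≤ 1) :
    (A.card : ℝ) * Real.logb 2 A.card ≤ ∑ a ∈ A, (l a : ℝ) := by
  rcases A.eq_empty_or_nonempty with rfl | hne
  · simp
  have hm : (0 : ℝ) < A.card := by exact_mod_cast Finset.card_pos.mpr hne
  set m : ℝ := (A.card : ℝ) with hmm
  -- Jensen for log
  have hconc : ConcaveOn ℝ (Set.Ioi 0) Real.log := strictConcaveOn_log_Ioi.concaveOn
  have hjen := hconc.le_map_sum (t := A) (w := fun _ => 1 / m)
    (p := fun a => (2 : ℝ) ^ (-(l a : ℤ)))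
    (fun i _ => by positivity)
    (by rw [Finset.sum_const, nsmul_eq_mul, ← hmm]; exact mul_one_div_cancel hm.ne')
    (fun i _ => by simp only [Set.mem_Ioi]; positivity)
  have hsum_pos : (0 : ℝ) < ∑ a ∈ A, (1 / m) • (2 : ℝ) ^ (-(l a : ℤ)) := by
    apply Finset.sum_pos (fun i _ => by positivity) hne
  have hsum_le : ∑ a ∈ A, (1 / m) • (2 : ℝ) ^ (-(l a : ℤ)) ≤ 1 / m := by
    simp only [smul_eq_mul, ← Finset.mul_sum]
    rw [div_mul_eq_mul_div, one_mul, div_le_div_iff₀ hm hm]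
    nlinarith
  have hlog_le : Real.log (∑ a ∈ A, (1 / m) • (2 : ℝ) ^ (-(l a : ℤ)))
      ≤ Real.log (1 / m) := Real.log_le_log hsum_pos hsum_le
  have hlhs : ∑ a ∈ A, (1 / m) • Real.log ((2 : ℝ) ^ (-(l a : ℤ)))
      = (1 / m) * (Real.log 2 * (-(∑ a ∈ A, (l a : ℝ)))) := by
    simp only [smul_eq_mul, ← Finset.mul_sum]
    congr 1
    rw [← Finset.sum_neg_distrib, Finset.mul_sum]
    refine Finset.sum_congr rfl fun a _ => ?_
    rw [Real.log_zpow]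
    push_cast
    ring
  have key : (1 / m) * (Real.log 2 * (-(∑ a ∈ A, (l a : ℝ)))) ≤ Real.log (1 / m) :=
    le_trans (by rw [← hlhs]; exact hjen) hlog_le
  rw [Real.log_div one_ne_zero (ne_of_gt hm), Real.log_one, zero_sub] at key
  have hlog2 : (0 : ℝ) < Real.log 2 := Real.log_pos (by norm_num)
  rw [one_div, inv_mul_le_iff₀ hm] at key
  rw [Real.logb, mul_div_assoc', div_le_iff₀ hlog2]
  nlinarith [key]


/-- For every set `L` of `n` distinct infinite binary strings and
`k = ⌈log₂ n⌉`, the `k`-excess path length satisfies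
`p_k(L) ≥ ∑_{v : C_v > 0} C_v·log₂ C_v`, the sum over depth-`k` trie nodes `v`
(identified with binary strings `s` of length `k`) of occupancy `C_v` many
strings of `L` having `s` as prefix. -/
theorem stmt_19 (L : Finset (ℕ → Bool)) (n : ℕ) (hn : L.card = n)
    (k : ℕ) (hk : k = Nat.clog 2 n)
    (φ : (ℕ → Bool) → List Bool) (hφ : IsMinimalKPrefixFamily L k φ)
    (C : (Fin k → Bool) → ℕ)
    (hC : ∀ s, C s = (L.filter (fun α => ∀ t : Fin k, α t = s t)).card) :
    ∑ s ∈ Finset.univ.filter (fun s : Fin k → Bool => 0 < C s),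
        (C s : ℝ) * Real.logb 2 (C s) ≤
      ∑ α ∈ L, (((φ α).length : ℝ) - k) := by
  classical
  obtain ⟨⟨hpre, hlen, hpf⟩, -⟩ := hφ
  set A : (Fin k → Bool) → Finset (ℕ → Bool) :=
    fun s => L.filter (fun α => ∀ t : Fin k, α t = s t) with hA
  -- the RHS splits as a sum over fibers
  have hsplit : ∑ α ∈ L, (((φ α).length : ℝ) - k)
      = ∑ s : Fin k → Bool, ∑ α ∈ A s, (((φ α).length : ℝ) - k) := by
    rw [← Finset.sum_fiberwise L (fun α (t : Fin k) => α t)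
      (fun α => (((φ α).length : ℝ) - k))]
    refine Finset.sum_congr rfl fun s _ => Finset.sum_congr ?_ (fun _ _ => rfl)
    refine Finset.filter_congr fun α _ => ?_
    simp [funext_iff]
  -- per-class entropy bound
  have hclass : ∀ s : Fin k → Bool,
      (C s : ℝ) * Real.logb 2 (C s) ≤ ∑ α ∈ A s, (((φ α).length : ℝ) - k) := by
    intro s
    have hmem : ∀ α ∈ A s, α ∈ L ∧ ∀ t : Fin k, α (t : ℕ) = s t := by
      intro α hα
      simpa [hA] using Finset.mem_filter.mp hα
    -- the tails beyond depth k are prefix-free within the class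
    have hpf' : ∀ a ∈ A s, ∀ b ∈ A s, a ≠ b → ¬ ((φ a).drop k <+: (φ b).drop k) := by
      intro a ha b hb hab hdp
      obtain ⟨haL, has⟩ := hmem a ha
      obtain ⟨hbL, hbs⟩ := hmem b hb
      refine hpf a haL b hbL hab ?_
      have htake : (φ a).take k = (φ b).take k := by
        apply List.ext_get
        · simp [Nat.min_eq_left (hlen a haL), Nat.min_eq_left (hlen b hbL)]
        · intro i h1 h2
          have hik : i < k := by
            simp only [List.length_take] at h1
            omega
          have h1a : i < (φ a).length := lt_of_lt_of_le hik (hlen a haL)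
          have h1b : i < (φ b).length := lt_of_lt_of_le hik (hlen b hbL)
          simp only [List.get_eq_getElem, List.getElem_take]
          have ea := hpre a haL ⟨i, h1a⟩
          have eb := hpre b hbL ⟨i, h1b⟩
          simp only [List.get_eq_getElem] at ea eb
          rw [ea, eb, has ⟨i, hik⟩, hbs ⟨i, hik⟩]
      rw [← List.take_append_drop k (φ a), ← List.take_append_drop k (φ b), htake]
      exact ((List.prefix_append_right_inj _).mpr hdp)
    have hkr := kraft (A s) (fun α => (φ α).drop k) hpf'
    have hent := entropy_bound (A s) (fun α => (φ α).length - k) (by simpa using hkr)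
    have hcard : ((A s).card : ℝ) = (C s : ℝ) := by rw [hC s]
    rw [hcard] at hent
    refine le_trans hent (le_of_eq ?_)
    refine Finset.sum_congr rfl fun α hα => ?_
    have := hlen α (hmem α hα).1
    push_cast [Nat.cast_sub this]
    ring
  -- assemble
  rw [hsplit]
  rw [← Finset.sum_filter_add_sum_filter_not Finset.univ
    (fun s : Fin k → Bool => 0 < C s)
    (fun s => ∑ α ∈ A s, (((φ α).length : ℝ) - k))]
  have hzero : ∑ s ∈ Finset.univ.filter (fun s : Fin k → Bool => ¬ 0 < C s),
      ∑ α ∈ A s, (((φ α).length : ℝ) - k) = 0 := by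
    refine Finset.sum_eq_zero fun s hs => ?_
    have hCs : C s = 0 := by
      have := (Finset.mem_filter.mp hs).2
      omega
    have : A s = ∅ := by
      rw [hC s] at hCs
      exact Finset.card_eq_zero.mp hCs
    simp [this]
  rw [hzero, add_zero]
  exact Finset.sum_le_sum fun s _ => hclass s
end
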